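/- arXiv:math/0002044 — 6 statements merged into one kernel-verified Lean document; each statement's English description precedes it below -/
import Mathlib

section
/- The Verlinde formula holds for A_1 level k: for all a,b,c ∈ {0,...,k}, N_{ab}^c = Σ_{d=0}^{k} S_{ad} S_{bd} (conj S_{cd}) / S_{0d}, where S_{ab} = sqrt(2/(k+2)) sin(π(a+1)(b+1)/(k+2)). -/
open Real

/-- The A₁ level k fusion coefficients. -/
def A1Fusion (k : ℕ) (a b c : Fin (k+1)) : ℕ :=
  if ((a : ℤ) + b + c) % 2 = 0 ∧ |(a : ℤ) - b| ≤ c ∧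
      (c : ℤ) ≤ min ((a : ℤ) + b) (2 * k - a - b) then 1 else 0

/-- The A₁ level k Kac-Peterson matrix. -/
noncomputable def A1S (k : ℕ) (a b : Fin (k+1)) : ℝ :=
  Real.sqrt (2 / (k + 2)) * Real.sin (π * (a + 1) * (b + 1) / (k + 2))

open Finset

/-!
Write `θ_d = π d / (k + 2)`. Up to the factor `2 / (k + 2)`, the `d`-th summand is
`sin ((a+1)θ) sin ((b+1)θ) sin ((c+1)θ) / sin θ`, and for `a ≤ b` the Clebsch–Gordan rule
`sin ((a+1)x) sin ((b+1)x) = sin x · ∑_{m ≤ a} sin ((b-a+1+2m)x)` removes the denominator. What is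
left is a sum of discrete sine orthogonality relations, which on the grid `θ_d` hold with an
aliasing term: `∑_d sin (jθ_d) sin (lθ_d) = (k+2)/2 · ([j = l] - [j + l = 2(k+2)])`. Hence the right
hand side counts the `m ≤ a` with `b - a + 2m = c`, minus those with `b - a + 2m = 2k + 2 - c`
(the affine Weyl reflection of `c`), and this difference is the truncated fusion rule.
-/

theorem two_mul_sin_mul_sum_range_cos (s : ℝ) (n : ℕ) :
    2 * sin s * ∑ d ∈ range n, cos (2 * d * s) = sin ((2 * n - 1) * s) + sin s := by
  induction n with
  | zero => simp [neg_mul, sin_neg]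
  | succ n ih =>
    rw [sum_range_succ, mul_add, ih, two_mul_sin_mul_cos,
      show s - 2 * n * s = -((2 * n - 1) * s) by ring, sin_neg]
    push_cast
    ring_nf

theorem sum_range_cos_int_mul_pi_div {n : ℕ} (hn : 0 < n) (m : ℤ) :
    ∑ d ∈ range n, cos (m * (π * d / n)) =
      (if Even m then 0 else 1) + if (2 * n : ℤ) ∣ m then (n : ℝ) else 0 := by
  by_cases hdvd : (2 * n : ℤ) ∣ m
  · obtain ⟨t, rfl⟩ := hdvd
    have hcos : ∀ d : ℕ, cos (((2 * n * t : ℤ) : ℝ) * (π * d / n)) = 1 := fun d => by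
      rw [← cos_int_mul_two_pi (t * d)]
      push_cast
      field_simp
    rw [sum_congr rfl fun d _ => hcos d]
    simp
  set s := m * π / (2 * n) with hs_def
  have hs : sin s ≠ 0 := by
    refine sin_ne_zero_iff.mpr fun z hz => hdvd ⟨z, ?_⟩
    have : ((m : ℤ) : ℝ) = 2 * n * z := by
      rw [hs_def] at hz
      field_simp at hz
      linarith
    exact_mod_cast this
  have key := two_mul_sin_mul_sum_range_cos s n
  rw [show (2 * n - 1) * s = m * π - s by rw [hs_def]; field_simp, sin_int_mul_pi_sub] at key
  simp_rw [show ∀ d : ℕ, 2 * d * s = m * (π * d / n) from fun d => by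
    rw [hs_def]; field_simp] at key
  rw [if_neg hdvd, add_zero]
  apply mul_left_cancel₀ (mul_ne_zero two_ne_zero hs)
  rw [key]
  rcases Int.even_or_odd m with hm | hm
  · rw [hm.neg_one_zpow, if_pos hm]; ring
  · rw [hm.neg_one_zpow, if_neg (Int.not_even_iff_odd.mpr hm)]; ring

theorem sum_range_sin_mul_sin {n j l : ℕ} (hj : j < 2 * n) (hl : l < 2 * n) (hjl : 0 < j + l) :
    ∑ d ∈ range n, sin (j * (π * d / n)) * sin (l * (π * d / n)) =
      n / 2 * ((if j = l then 1 else 0) - if j + l = 2 * n then 1 else 0) := by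
  have hn : 0 < n := by omega
  have hprod : ∀ d : ℕ, sin (j * (π * d / n)) * sin (l * (π * d / n)) =
      (cos (((j - l : ℤ) : ℝ) * (π * d / n)) - cos (((j + l : ℤ) : ℝ) * (π * d / n))) / 2 :=
    fun d => by
      push_cast
      rw [sub_mul, add_mul, ← two_mul_sin_mul_sin]
      ring
  have hsub : (2 * n : ℤ) ∣ (j - l : ℤ) ↔ j = l := by
    refine ⟨fun h => ?_, fun h => by simp [h]⟩
    have := Int.eq_zero_of_abs_lt_dvd h (abs_lt.mpr ⟨by omega, by omega⟩)
    omega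
  have hadd : (2 * n : ℤ) ∣ (j + l : ℤ) ↔ j + l = 2 * n := by
    rw [← dvd_sub_self_right]
    refine ⟨fun h => ?_, fun h => ⟨0, by omega⟩⟩
    have := Int.eq_zero_of_abs_lt_dvd h (abs_lt.mpr ⟨by omega, by omega⟩)
    omega
  have hpar : Even (j - l : ℤ) ↔ Even (j + l : ℤ) := by
    simp only [Int.even_iff]; omega
  simp_rw [hprod, ← sum_div, sum_sub_distrib, sum_range_cos_int_mul_pi_div hn, hsub, hadd, hpar]
  split_ifs <;> ring

theorem sin_mul_sin_eq_sin_mul_sum_sin (a e : ℕ) (x : ℝ) :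
    sin ((a + 1) * x) * sin ((a + e + 1) * x) =
      sin x * ∑ m ∈ range (a + 1), sin ((e + 1 + 2 * m) * x) := by
  let f : ℕ → ℝ := fun m => cos ((e + 2 * m) * x)
  have hstep : ∀ m : ℕ, 2 * (sin x * sin ((e + 1 + 2 * m) * x)) = f m - f (m + 1) := fun m => by
    rw [← mul_assoc, two_mul_sin_mul_sin, show x - (e + 1 + 2 * m) * x = -((e + 2 * m) * x) by ring,
      cos_neg]
    simp only [f]
    push_cast
    ring_nf
  apply mul_left_cancel₀ (two_ne_zero' ℝ)
  rw [mul_sum, mul_sum, sum_congr rfl fun m _ => hstep m, sum_range_sub', ← mul_assoc,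
    two_mul_sin_mul_sin, show (a + 1) * x - (a + e + 1) * x = -(e * x) by ring, cos_neg]
  simp only [f]
  push_cast
  ring_nf

theorem sum_range_sin_mul_sin_mul_sin_div_sin {n : ℕ} (a e c : ℕ) (ha : 2 * a + e + 1 < 2 * n)
    (hc : c + 1 < 2 * n) :
    ∑ d ∈ range n, sin ((a + 1) * (π * d / n)) * sin ((a + e + 1) * (π * d / n)) *
        sin ((c + 1) * (π * d / n)) / sin (π * d / n) =
      n / 2 * ∑ m ∈ range (a + 1),
        ((if e + 1 + 2 * m = c + 1 then 1 else 0) -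
          if e + 1 + 2 * m + (c + 1) = 2 * n then 1 else 0) := by
  have hpoint : ∀ d ∈ range n,
      sin ((a + 1) * (π * d / n)) * sin ((a + e + 1) * (π * d / n)) *
          sin ((c + 1) * (π * d / n)) / sin (π * d / n) =
        ∑ m ∈ range (a + 1),
          sin (((e + 1 + 2 * m : ℕ) : ℝ) * (π * d / n)) * sin (((c + 1 : ℕ) : ℝ) * (π * d / n)) := by
    intro d hd
    rcases Nat.eq_zero_or_pos d with rfl | hd0
    -- both sides vanish at `d = 0`, the left one because `x / 0 = 0`
    · simp
    have hn : (0 : ℝ) < n := by exact_mod_cast (mem_range.mp hd).pos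
    have hsin : sin (π * d / n) ≠ 0 := by
      refine (sin_pos_of_pos_of_lt_pi (by positivity) ?_).ne'
      rw [div_lt_iff₀ hn, mul_lt_mul_iff_right₀ pi_pos]
      exact_mod_cast mem_range.mp hd
    rw [sin_mul_sin_eq_sin_mul_sum_sin, mul_assoc, mul_div_cancel_left₀ _ hsin, sum_mul]
    push_cast
    rfl
  rw [sum_congr rfl hpoint, sum_comm, mul_sum]
  refine sum_congr rfl fun m hm => sum_range_sin_mul_sin ?_ ?_ ?_
  all_goals have := mem_range.mp hm; omega

theorem sum_range_ite_add_two_mul_eq {R : Type*} [AddCommMonoidWithOne R] (N p q : ℕ) :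
    ∑ m ∈ range N, (if p + 2 * m = q then (1 : R) else 0) =
      if p ≤ q ∧ q < p + 2 * N ∧ q % 2 = p % 2 then 1 else 0 := by
  induction N with
  | zero => rw [sum_range_zero, if_neg (by omega)]
  | succ N ih =>
    rw [sum_range_succ, ih]
    split_ifs <;> first | omega | simp

theorem A1Fusion_comm (k : ℕ) (a b c : Fin (k + 1)) : A1Fusion k a b c = A1Fusion k b a c := by
  simp only [A1Fusion, add_comm (a : ℤ), abs_sub_comm (a : ℤ), sub_right_comm _ (a : ℤ)]

theorem A1Fusion_eq_sum_sub (k : ℕ) {a b : Fin (k + 1)} (c : Fin (k + 1)) {e : ℕ}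
    (hb : (b : ℕ) = a + e) :
    (A1Fusion k a b c : ℝ) = ∑ m ∈ range (a + 1),
      ((if e + 1 + 2 * m = c + 1 then 1 else 0) -
        if e + 1 + 2 * m + (c + 1) = 2 * (k + 2) then 1 else 0) := by
  have hshift : ∀ m : ℕ, e + 1 + 2 * m = c + 1 ↔ e + 2 * m = c := fun m => by omega
  have hreflect : ∀ m : ℕ, e + 1 + 2 * m + (c + 1) = 2 * (k + 2) ↔ e + 2 * m = 2 * k + 2 - c :=
    fun m => by omega
  simp_rw [sum_sub_distrib, hshift, hreflect,
    sum_range_ite_add_two_mul_eq, A1Fusion, abs_sub_le_iff, le_min_iff]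
  have hc := c.isLt
  split_ifs <;> first | omega | norm_num

theorem sum_A1S_mul_A1S_mul_A1S_div_A1S_zero (k : ℕ) (a b c : Fin (k + 1)) :
    ∑ d : Fin (k + 1), A1S k a d * A1S k b d * A1S k c d / A1S k 0 d =
      2 / (k + 2 : ℕ) * ∑ d ∈ range (k + 2),
        sin ((a + 1) * (π * d / (k + 2 : ℕ))) * sin ((b + 1) * (π * d / (k + 2 : ℕ))) *
          sin ((c + 1) * (π * d / (k + 2 : ℕ))) / sin (π * d / (k + 2 : ℕ)) := by
  have hs : √(2 / (k + 2)) ≠ 0 := (sqrt_pos.mpr (by positivity)).ne'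
  have hpoint : ∀ x y z w : ℝ, (√(2 / (k + 2)) * x) * (√(2 / (k + 2)) * y) *
      (√(2 / (k + 2)) * z) / (√(2 / (k + 2)) * w) = 2 / (k + 2) * (x * y * z / w) := by
    intro x y z w
    rw [show (√(2 / (k + 2)) * x) * (√(2 / (k + 2)) * y) * (√(2 / (k + 2)) * z) =
        √(2 / (k + 2)) * (√(2 / (k + 2)) * √(2 / (k + 2)) * (x * y * z)) by ring,
      mul_div_mul_left _ _ hs, mul_self_sqrt (by positivity), mul_div_assoc]
  rw [sum_range_succ']
  simp only [Nat.cast_zero, mul_zero, zero_div, sin_zero, div_zero, add_zero]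
  rw [← Fin.sum_univ_eq_sum_range, mul_sum]
  refine sum_congr rfl fun d _ => ?_
  simp only [A1S, hpoint, Fin.val_zero, Nat.cast_zero, zero_add, mul_one]
  push_cast
  ring_nf

theorem A1_verlinde_general (k : ℕ) (a b c : Fin (k+1)) :
    (A1Fusion k a b c : ℝ) =
      ∑ d : Fin (k+1), A1S k a d * A1S k b d * A1S k c d / A1S k 0 d := by
  wlog hab : a ≤ b generalizing a b
  · simpa only [A1Fusion_comm k a b, mul_comm (A1S k a _)] using this b a (le_of_not_ge hab)
  obtain ⟨e, he⟩ := Nat.exists_eq_add_of_le hab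
  have hb : ((b : ℕ) : ℝ) = a + e := by exact_mod_cast he
  have hnorm : 2 / ((k + 2 : ℕ) : ℝ) * ((k + 2 : ℕ) / 2) = 1 := by field_simp
  rw [A1Fusion_eq_sum_sub k c he, sum_A1S_mul_A1S_mul_A1S_div_A1S_zero, hb,
    sum_range_sin_mul_sin_mul_sin_div_sin a e c (by omega) (by omega), ← mul_assoc, hnorm, one_mul]

theorem A1_verlinde (k : ℕ) (hk : 0 < k) (a b c : Fin (k+1)) :
    (A1Fusion k a b c : ℝ) =
      ∑ d : Fin (k+1), A1S k a d * A1S k b d * A1S k c d / A1S k 0 d :=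
  A1_verlinde_general k a b c
end

section
/- Let S be a unitary symmetric matrix indexed by a finite set Φ with distinguished element 0 and S_{0b} > 0 for all b, and define N_{ab}^c = Σ_d S_{ad}S_{bd} conj(S_{cd})/S_{0d}. If π, π' are bijections of Φ satisfying S_{πa, π'b} = S_{ab} for all a,b ∈ Φ, then N_{πa,πb}^{πc} = N_{ab}^c for all a,b,c ∈ Φ. -/
/-!
The permutation `π` fixes the distinguished index `z`: row `π z` of `S` is row `z` permuted by `π'`,
so both rows have positive entries and cannot be orthogonal, as distinct rows of a unitary matrix
are. Hence `S z (π' d) = S z d`, and reindexing the sum defining `N` by `π'` gives the invariance.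
-/

open Matrix Complex
open scoped ComplexOrder

theorem Matrix.eq_of_mul_conjTranspose_eq_one_of_pos_row {ι : Type*} [Fintype ι] [DecidableEq ι]
    {S : Matrix ι ι ℂ} (hS : S * Sᴴ = 1) {i j : ι}
    (hi : ∀ d, 0 < S i d) (hj : ∀ d, 0 < S j d) : i = j := by
  by_contra hij
  have horth : ∑ d, S i d * star (S j d) = 0 := by
    simpa [Matrix.mul_apply, hij] using congrFun (congrFun hS i) j
  exact (Finset.sum_pos (fun d _ => mul_pos (hi d) (star_pos_iff.mpr (hj d)))
    ⟨i, Finset.mem_univ i⟩).ne' horth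

theorem S_symmetry_gives_fusion_symmetry_general
    {Φ : Type*} [Fintype Φ] [DecidableEq Φ] (z : Φ)
    (S : Matrix Φ Φ ℂ)
    (hunit : Sᴴ * S = 1)
    (hpos : ∀ b, (S z b).im = 0 ∧ 0 < (S z b).re)
    (N : Φ → Φ → Φ → ℂ)
    (hN : ∀ a b c, N a b c = ∑ d, S a d * S b d * (starRingEnd ℂ) (S c d) / S z d)
    (π π' : Equiv.Perm Φ)
    (hS : ∀ a b, S (π a) (π' b) = S a b) :
    ∀ a b c, N (π a) (π b) (π c) = N a b c := by
  have hz_pos : ∀ d, 0 < S z d := fun d => lt_def.mpr ⟨(hpos d).2, (hpos d).1.symm⟩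
  have hπz : π z = z := by
    refine eq_of_mul_conjTranspose_eq_one_of_pos_row (mul_eq_one_comm.mp hunit) (fun d => ?_) hz_pos
    rw [← π'.apply_symm_apply d, hS]
    exact hz_pos _
  have hz : ∀ d, S z (π' d) = S z d := fun d => by
    rw [← hS z d, hπz]
  intro a b c
  rw [hN, hN]
  exact (Fintype.sum_equiv π' _ _ fun d => by rw [hS, hS, hS, hz]).symm

theorem S_symmetry_gives_fusion_symmetry
    {Φ : Type*} [Fintype Φ] [DecidableEq Φ] (z : Φ)
    (S : Matrix Φ Φ ℂ)
    (hunit : Sᴴ * S = 1) (hsymm : S.IsSymm)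
    (hpos : ∀ b, (S z b).im = 0 ∧ 0 < (S z b).re)
    (N : Φ → Φ → Φ → ℂ)
    (hN : ∀ a b c, N a b c = ∑ d, S a d * S b d * (starRingEnd ℂ) (S c d) / S z d)
    (π π' : Equiv.Perm Φ)
    (hS : ∀ a b, S (π a) (π' b) = S a b) :
    ∀ a b c, N (π a) (π b) (π c) = N a b c :=
  S_symmetry_gives_fusion_symmetry_general z S hunit hpos N hN π π' hS
end

section
/- Let S be a unitary symmetric matrix indexed by finite Φ with S_{0b} > 0 for all b, and fusion coefficients N_{ab}^c = Σ_d S_{ad}S_{bd} conj(S_{cd})/S_{0d}. If π is a permutation of Φ with N_{πa,πb}^{πc} = N_{ab}^c for all a,b,c, then there is a permutation π' of Φ such that S_{πa,π'b} = S_{ab} for all a,b ∈ Φ. -/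
/-!
For each `a` the fusion matrix `N_a = (N_{ab}^c)_{b,c}` equals `S D_a Sᴴ` with
`D_a = diag(S_{ad} / S_{0d})`. Invariance under `π` says that the row-permuted unitary
`V_{ab} = S_{πa,b}` diagonalizes the same fusion matrices, with eigenvalues
`V_{ae} / V_{π⁻¹0,e}`. Hence the unitary `Sᴴ V` intertwines the two families of diagonal
matrices: whenever `(Sᴴ V)_{de} ≠ 0`, column `e` of `V` is a positive multiple of column `d`
of `S`, and as both columns are unit vectors they coincide. Every row of the invertible
matrix `Sᴴ V` has a nonzero entry, and the columns of `S` are pairwise distinct, so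
`d ↦ e` is a permutation.
-/

open Matrix Complex

open scoped ComplexOrder

section

variable {Φ : Type*} [Fintype Φ]

theorem eq_of_eq_pos_smul_of_star_dotProduct_self_eq {u v : Φ → ℂ} {r : ℂ} (hr : 0 < r)
    (hv : v = r • u) (h : star v ⬝ᵥ v = star u ⬝ᵥ u) (hu : u ≠ 0) : v = u := by
  have hsq : r * r = 1 := by
    rw [hv, star_smul, smul_dotProduct, dotProduct_smul, (IsSelfAdjoint.of_nonneg hr.le).star_eq,
      smul_smul, smul_eq_mul] at h
    exact (mul_eq_right₀ (dotProduct_star_self_eq_zero.not.mpr hu)).mp h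
  have hr_one : r = 1 :=
    (mul_self_eq_one_iff.mp hsq).resolve_right fun h =>
      lt_asymm (neg_lt_zero.mpr zero_lt_one) (h ▸ hr)
  rw [hv, hr_one, one_smul]

variable [DecidableEq Φ]

theorem star_col_dotProduct_col_eq_one {R : Type*} [Semiring R] [StarRing R]
    {U : Matrix Φ Φ R} (hU : Uᴴ * U = 1) (d : Φ) : star (U.col d) ⬝ᵥ U.col d = 1 :=
  (congrFun (congrFun hU d) d).trans (one_apply_eq d)

theorem intertwines_conjTranspose_mul_of_conj_eq {R : Type*} [Semiring R] [StarRing R]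
    {U V A B : Matrix Φ Φ R} (hU : Uᴴ * U = 1) (hV : Vᴴ * V = 1)
    (h : U * A * Uᴴ = V * B * Vᴴ) : A * (Uᴴ * V) = (Uᴴ * V) * B :=
  calc A * (Uᴴ * V) = Uᴴ * (U * A * Uᴴ) * V := by
        simp only [Matrix.mul_assoc, ← Matrix.mul_assoc Uᴴ U, hU, Matrix.one_mul]
    _ = Uᴴ * (V * B * Vᴴ) * V := by rw [h]
    _ = (Uᴴ * V) * B := by simp only [Matrix.mul_assoc, hV, Matrix.mul_one]

noncomputable def fusionMatrix (S : Matrix Φ Φ ℂ) (z a : Φ) : Matrix Φ Φ ℂ :=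
  S * diagonal (fun d => S a d / S z d) * Sᴴ

theorem fusionMatrix_apply (S : Matrix Φ Φ ℂ) (z a b c : Φ) :
    fusionMatrix S z a b c = ∑ d, S a d * S b d * starRingEnd ℂ (S c d) / S z d := by
  rw [fusionMatrix, mul_apply]
  simp only [mul_diagonal, conjTranspose_apply, RCLike.star_def]
  exact Finset.sum_congr rfl fun d _ => by ring

variable {S V : Matrix Φ Φ ℂ} {z z' : Φ}

theorem exists_col_eq_of_fusionMatrix_eq (hS : Sᴴ * S = 1) (hV : Vᴴ * V = 1)
    (hSz : ∀ d, 0 < S z d) (hVz : ∀ d, 0 < V z' d) (h : fusionMatrix S z = fusionMatrix V z')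
    (d : Φ) : ∃ e, V.col e = S.col d := by
  have hC : IsUnit (Sᴴ * V) :=
    (IsUnit.of_mul_eq_one_right _ hS).star.mul (IsUnit.of_mul_eq_one_right _ hV)
  obtain ⟨e, he⟩ : ∃ e, (Sᴴ * V) d e ≠ 0 :=
    Function.ne_iff.mp ((linearIndependent_rows_of_isUnit hC).ne_zero d)
  have hweight : ∀ a, S a d * V z' e = V a e * S z d := by
    intro a
    have := congrFun (congrFun (intertwines_conjTranspose_mul_of_conj_eq hS hV (congrFun h a)) d) e
    rw [diagonal_mul, mul_diagonal] at this
    rw [← div_eq_div_iff (hSz d).ne' (hVz e).ne']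
    exact mul_right_cancel₀ he (this.trans (mul_comm _ _))
  refine ⟨e, eq_of_eq_pos_smul_of_star_dotProduct_self_eq (div_pos (hVz e) (hSz d)) ?_ ?_ ?_⟩
  · ext a
    simp only [col_apply, Pi.smul_apply, smul_eq_mul]
    rw [div_mul_eq_mul_div, eq_div_iff (hSz d).ne']
    linear_combination -hweight a
  · rw [star_col_dotProduct_col_eq_one hV, star_col_dotProduct_col_eq_one hS]
  · exact fun h0 => by simpa [h0] using star_col_dotProduct_col_eq_one hS d

theorem exists_perm_col_eq_of_fusionMatrix_eq (hS : Sᴴ * S = 1) (hV : Vᴴ * V = 1)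
    (hSz : ∀ d, 0 < S z d) (hVz : ∀ d, 0 < V z' d) (h : fusionMatrix S z = fusionMatrix V z') :
    ∃ σ : Equiv.Perm Φ, ∀ d, V.col (σ d) = S.col d := by
  choose σ hσ using exists_col_eq_of_fusionMatrix_eq hS hV hSz hVz h
  have hσ_inj : σ.Injective := fun d d' hdd =>
    (linearIndependent_cols_of_isUnit (IsUnit.of_mul_eq_one_right _ hS)).injective
      (by rw [← hσ, ← hσ, hdd])
  exact ⟨Equiv.ofBijective σ (Finite.injective_iff_bijective.mp hσ_inj), hσ⟩

end

theorem fusion_symmetry_gives_S_symmetry_general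
    {Φ : Type*} [Fintype Φ] [DecidableEq Φ] (z : Φ)
    (S : Matrix Φ Φ ℂ)
    (hunit : Sᴴ * S = 1)
    (hpos : ∀ b, (S z b).im = 0 ∧ 0 < (S z b).re)
    (N : Φ → Φ → Φ → ℂ)
    (hN : ∀ a b c, N a b c = ∑ d, S a d * S b d * (starRingEnd ℂ) (S c d) / S z d)
    (π : Equiv.Perm Φ)
    (hπ : ∀ a b c, N (π a) (π b) (π c) = N a b c) :
    ∃ π' : Equiv.Perm Φ, ∀ a b, S (π a) (π' b) = S a b := by
  have hSz : ∀ b, 0 < S z b := fun b => Complex.pos_iff.mpr ⟨(hpos b).2, (hpos b).1.symm⟩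
  set V := S.submatrix π id
  have hV : Vᴴ * V = 1 := by
    rw [conjTranspose_submatrix, submatrix_mul_equiv, hunit, submatrix_id_id]
  have hVz : ∀ b, 0 < V (π.symm z) b := by simpa [V] using hSz
  have hfus : fusionMatrix S z = fusionMatrix V (π.symm z) := by
    ext a b c
    simp only [fusionMatrix_apply, ← hN, V, submatrix_apply, id, Equiv.apply_symm_apply, hπ]
  obtain ⟨σ, hσ⟩ := exists_perm_col_eq_of_fusionMatrix_eq hunit hV hSz hVz hfus
  exact ⟨σ, fun a b => congrFun (hσ b) a⟩

theorem fusion_symmetry_gives_S_symmetry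
    {Φ : Type*} [Fintype Φ] [DecidableEq Φ] (z : Φ)
    (S : Matrix Φ Φ ℂ)
    (hunit : Sᴴ * S = 1) (hsymm : S.IsSymm)
    (hpos : ∀ b, (S z b).im = 0 ∧ 0 < (S z b).re)
    (N : Φ → Φ → Φ → ℂ)
    (hN : ∀ a b c, N a b c = ∑ d, S a d * S b d * (starRingEnd ℂ) (S c d) / S z d)
    (π : Equiv.Perm Φ)
    (hπ : ∀ a b c, N (π a) (π b) (π c) = N a b c) :
    ∃ π' : Equiv.Perm Φ, ∀ a b, S (π a) (π' b) = S a b :=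
  fusion_symmetry_gives_S_symmetry_general z S hunit hpos N hN π hπ
end

section
/- For the A_1 level k fusion ring with k even, the map π(a) = a if a is even and π(a) = k - a if a is odd is a fusion-ring automorphism: N_{πa,πb}^{πc} = N_{ab}^c for all a,b,c ∈ {0,...,k}. -/
/-- The simple-current automorphism of the A₁ level k fusion ring (k even):
`a ↦ a` for even `a` and `a ↦ k - a` for odd `a`. -/
def A1scAut (k : ℕ) (a : Fin (k+1)) : Fin (k+1) :=
  if (a : ℕ) % 2 = 0 then a else ⟨k - a, by omega⟩

/-!
Fusion with the simple current `k` sends `a` to `k - a` (`Fin.rev`), and the fusion rules are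
invariant under reversing any two of the three labels. For `k` even, reversal preserves parity,
so `A1scAut` reverses an even number of the labels of any nonzero coefficient `N_{ab}^c`
(which needs `a + b + c` even), while both sides vanish when `a + b + c` is odd.
-/

namespace A1Fusion

variable {k : ℕ} (a b c : Fin (k+1))

theorem rev_left_rev_out : A1Fusion k a.rev b c.rev = A1Fusion k a b c := by
  unfold A1Fusion
  refine if_congr ?_ rfl rfl
  simp only [Fin.val_rev, abs_le, le_min_iff]
  omega

theorem rev_right_rev_out : A1Fusion k a b.rev c.rev = A1Fusion k a b c := by
  unfold A1Fusion
  refine if_congr ?_ rfl rfl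
  simp only [Fin.val_rev, abs_le, le_min_iff]
  omega

theorem rev_left_rev_right : A1Fusion k a.rev b.rev c = A1Fusion k a b c := by
  simpa only [Fin.rev_rev] using (rev_right_rev_out a.rev b c.rev).trans (rev_left_rev_out a b c)

theorem eq_zero_of_odd (h : (a + b + c : ℕ) % 2 = 1) : A1Fusion k a b c = 0 :=
  if_neg fun h' => by omega

end A1Fusion

theorem A1scAut_eq_ite {k : ℕ} (a : Fin (k+1)) :
    A1scAut k a = if (a : ℕ) % 2 = 0 then a else a.rev := by
  unfold A1scAut
  split_ifs
  · rfl
  · ext; simp only [Fin.val_rev]; omega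

theorem A1scAut_is_fusion_automorphism_general (k : ℕ) (hke : k % 2 = 0)
    (a b c : Fin (k+1)) :
    A1Fusion k (A1scAut k a) (A1scAut k b) (A1scAut k c) = A1Fusion k a b c := by
  simp only [A1scAut_eq_ite]
  split_ifs
  · rfl
  · rw [A1Fusion.eq_zero_of_odd, A1Fusion.eq_zero_of_odd] <;> grind
  · rw [A1Fusion.eq_zero_of_odd, A1Fusion.eq_zero_of_odd] <;> grind
  · exact A1Fusion.rev_right_rev_out ..
  · rw [A1Fusion.eq_zero_of_odd, A1Fusion.eq_zero_of_odd] <;> grind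
  · exact A1Fusion.rev_left_rev_out ..
  · exact A1Fusion.rev_left_rev_right ..
  · rw [A1Fusion.eq_zero_of_odd, A1Fusion.eq_zero_of_odd] <;> grind

theorem A1scAut_is_fusion_automorphism (k : ℕ) (hk : 0 < k) (hke : k % 2 = 0)
    (a b c : Fin (k+1)) :
    A1Fusion k (A1scAut k a) (A1scAut k b) (A1scAut k c) = A1Fusion k a b c :=
  A1scAut_is_fusion_automorphism_general k hke a b c
end

section
/- For the A_1 level k fusion ring with k odd, the identity is the only fusion automorphism: if π is a permutation of {0,...,k} with N_{πa,πb}^{πc} = N_{ab}^c for all a,b,c, then π = id. -/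
open Finset

def IsFusionAut {ι : Type*} (N : ι → ι → ι → ℕ) (π : Equiv.Perm ι) : Prop :=
  ∀ a b c, N (π a) (π b) (π c) = N a b c

namespace IsFusionAut

variable {ι : Type*} {N : ι → ι → ι → ℕ} {π : Equiv.Perm ι}

theorem exists_self_apply_iff (h : IsFusionAut N π) (c : ι) :
    (∃ a, N a a (π c) = 1) ↔ ∃ a, N a a c = 1 := by
  refine ⟨fun ⟨a, ha⟩ => ⟨π.symm a, ?_⟩, fun ⟨a, ha⟩ => ⟨π a, by rwa [h]⟩⟩
  rw [← h]
  simpa using ha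

theorem card_filter_self_apply [Fintype ι] (h : IsFusionAut N π) (a : ι) :
    #{c | N (π a) (π a) c = 1} = #{c | N a a c = 1} :=
  (card_equiv π fun c => by simp [h a a c]).symm

end IsFusionAut

variable {k : ℕ}

theorem A1Fusion_eq_one_iff (a b c : Fin (k+1)) :
    A1Fusion k a b c = 1 ↔ ((a : ℕ) + b + c) % 2 = 0 ∧ (b : ℕ) ≤ a + c ∧
      (a : ℕ) ≤ b + c ∧ (c : ℕ) ≤ a + b ∧ (a : ℕ) + b + c ≤ 2 * k := by
  unfold A1Fusion
  split_ifs with h <;> simp only [abs_sub_le_iff, le_min_iff, true_iff, false_iff] at h ⊢ <;> omega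

theorem A1Fusion_self_eq_one_iff (a c : Fin (k+1)) :
    A1Fusion k a a c = 1 ↔ (c : ℕ) % 2 = 0 ∧ (c : ℕ) ≤ 2 * min (a : ℕ) (k - a) := by
  have := a.is_le
  rw [A1Fusion_eq_one_iff]
  omega

theorem card_filter_even_le_two_mul {m : ℕ} (hm : 2 * m ≤ k) :
    #{c : Fin (k+1) | (c : ℕ) % 2 = 0 ∧ (c : ℕ) ≤ 2 * m} = m + 1 := by
  rw [← card_range (m + 1)]
  refine card_nbij' (fun c => (c : ℕ) / 2) (fun j => ⟨min (2 * j) k, by omega⟩) ?_ ?_ ?_ ?_ <;>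
    intro x hx <;> simp_all [Fin.ext_iff] <;> omega

theorem card_filter_A1Fusion_self (a : Fin (k+1)) :
    #{c | A1Fusion k a a c = 1} = min (a : ℕ) (k - a) + 1 := by
  simp_rw [A1Fusion_self_eq_one_iff]
  exact card_filter_even_le_two_mul (by omega)

theorem even_iff_exists_A1Fusion_self (c : Fin (k+1)) :
    (c : ℕ) % 2 = 0 ↔ ∃ a, A1Fusion k a a c = 1 := by
  refine ⟨fun hc => ⟨⟨c / 2, by omega⟩, ?_⟩, fun ⟨a, ha⟩ => ?_⟩ <;>
    simp only [A1Fusion_self_eq_one_iff] at * <;> omega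

namespace IsFusionAut

variable {π : Equiv.Perm (Fin (k+1))}

theorem A1Fusion_val_mod_two (h : IsFusionAut (A1Fusion k) π) (c : Fin (k+1)) :
    (π c : ℕ) % 2 = c % 2 := by
  have := (even_iff_exists_A1Fusion_self (π c)).trans
    ((h.exists_self_apply_iff c).trans (even_iff_exists_A1Fusion_self c).symm)
  omega

theorem A1Fusion_val_eq_or (h : IsFusionAut (A1Fusion k) π) (a : Fin (k+1)) :
    (π a : ℕ) = a ∨ (π a : ℕ) = k - a := by
  have := h.card_filter_self_apply a
  simp only [card_filter_A1Fusion_self] at this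
  omega

end IsFusionAut

theorem A1_odd_level_no_nontrivial_automorphism_general (k : ℕ)
    (hko : k % 2 = 1) (π : Equiv.Perm (Fin (k+1)))
    (hπ : ∀ a b c, A1Fusion k (π a) (π b) (π c) = A1Fusion k a b c) :
    π = 1 := by
  have hπ' : IsFusionAut (A1Fusion k) π := hπ
  ext a
  have := hπ'.A1Fusion_val_mod_two a
  have := hπ'.A1Fusion_val_eq_or a
  have := a.is_le
  simp only [Equiv.Perm.coe_one, id_eq]
  omega

theorem A1_odd_level_no_nontrivial_automorphism (k : ℕ) (hk : 0 < k)
    (hko : k % 2 = 1) (π : Equiv.Perm (Fin (k+1)))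
    (hπ : ∀ a b c, A1Fusion k (π a) (π b) (π c) = A1Fusion k a b c) :
    π = 1 :=
  A1_odd_level_no_nontrivial_automorphism_general k hko π hπ
end

section
/- For real x with 0 < x ≤ 2π/9, one has 1 + cos(x) + cos(2x) + cos(4x) > cos(x/2) + cos(3x/2) + cos(5x/2) + cos(7x/2). -/
open Real

theorem cos_sum_sub_cos_half_sum_eq_mul (x : ℝ) :
    1 + cos x + cos (2 * x) + cos (4 * x) -
        (cos (x / 2) + cos (3 * x / 2) + cos (5 * x / 2) + cos (7 * x / 2)) =
      2 * (cos (x / 2) - cos x) * (cos (x / 2) - cos (3 * x)) := by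
  have h₁ := two_mul_cos_mul_cos (x / 2) (x / 2)
  have h₂ := two_mul_cos_mul_cos x (x / 2)
  have h₃ := two_mul_cos_mul_cos (3 * x) (x / 2)
  have h₄ := two_mul_cos_mul_cos (3 * x) x
  ring_nf at h₁ h₂ h₃ h₄ ⊢
  rw [cos_zero] at h₁
  linear_combination h₂ + h₃ - h₁ - h₄

theorem D4_cos_inequality (x : ℝ) (hx : 0 < x) (hx' : x ≤ 2 * π / 9) :
    cos (x / 2) + cos (3 * x / 2) + cos (5 * x / 2) + cos (7 * x / 2) <
      1 + cos x + cos (2 * x) + cos (4 * x) := by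
  have cos_lt_cos_half {y : ℝ} (hxy : x / 2 < y) (hy : y ≤ π) : cos y < cos (x / 2) :=
    cos_lt_cos_of_nonneg_of_le_pi (by linarith) hy hxy
  have h₁ : cos x < cos (x / 2) := cos_lt_cos_half (by linarith) (by linarith [pi_pos])
  have h₃ : cos (3 * x) < cos (x / 2) := cos_lt_cos_half (by linarith) (by linarith [pi_pos])
  rw [← sub_pos, cos_sum_sub_cos_half_sum_eq_mul]
  exact mul_pos (mul_pos two_pos (sub_pos.2 h₁)) (sub_pos.2 h₃)
end
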